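/- arXiv:2602.08264 — 2 statements merged into one kernel-verified Lean document; each statement's English description precedes it below -/
import Mathlib

section
/- Let p be a prime and let M, N be integers with 0 ≤ M and N > M + 1. Let Ŝ : ℤ^M × ℤ^N → ℤ^M × ℤ^N be the map given by applying the Serganova algorithm S₁ to (λ, (θ_1,…,θ_{M+1})) and leaving the entries θ_{M+2},…,θ_N unchanged. Let Â ⊆ ℤ^M × ℤ^N be the set of pairs with λ_1 ≥ … ≥ λ_M and θ_1 ≥ θ_2 ≥ … ≥ θ_N, and let 𝕄̂ ⊆ ℤ^M × ℤ^N be the set of pairs satisfying λ_1 ≥ … ≥ λ_M, θ_1 ≥ θ_2 ≥ … ≥ θ_N, and: for 1 ≤ i ≤ M, θ_i = θ_{i+1} implies θ_i + λ_i ≡ 0 (mod p), and for 2 ≤ i ≤ M, λ_{i−1} = λ_i implies θ_i + λ_i ≡ 0 (mod p). Then Ŝ(Â) = 𝕄̂. -/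
/-!
Each step preserves `λ_i + θ_j`, hence whether it fires, so it is undone by the step that moves
in the opposite direction; `Ŝ` is therefore a bijection whose inverse runs the reversed order
backwards. It remains to see that `Ŝ` maps `Â` into `𝕄̂` and that its inverse maps `𝕄̂` into `Â`.
Both go by induction on `M`: the algorithm is a pass along the first column followed by a copy of
the algorithm for `M - 1` on the shifted indices. A pass along one column keeps `λ` antitone,
and passes along two consecutive columns keep `θ_{j+1} ≤ θ_j`, because at an equal pair a step
that does not fire blocks the next one. The divisibility conditions of `𝕄̂` record precisely that
the last step at an equal pair did not fire.
-/

open Function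

/-- The state for the extended algorithm: a pair `(λ, θ) ∈ ℤ^M × ℤ^N` (0-based indices). -/
abbrev NState (M N : ℕ) := (Fin M → ℤ) × (Fin N → ℤ)

/-- One step of the Serganova algorithm at the (0-based) pair `(i, j)`:
if `λ_i + θ_j ≡ 0 (mod p)` nothing changes, otherwise `λ_i` is decreased by `1`
and `θ_j` is increased by `1`. -/
def nStep (p M N : ℕ) (ij : Fin M × Fin N) (s : NState M N) : NState M N :=
  if (p : ℤ) ∣ s.1 ij.1 + s.2 ij.2 then s
  else (Function.update s.1 ij.1 (s.1 ij.1 - 1),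
        Function.update s.2 ij.2 (s.2 ij.2 + 1))

/-- The Version 1 order on the pair set `P = {(i,j) : 0 ≤ j ≤ i ≤ M-1}` (0-based):
`j` increasing, and for fixed `j`, `i` decreasing from `M-1` down to `j`. -/
def order1 (M : ℕ) : List (Fin M × Fin (M + 1)) :=
  (List.finRange M).flatMap fun j =>
    ((List.finRange M).reverse.filter fun i => j ≤ i).map fun i => (i, j.castSucc)

/-- The extension `Ŝ` of the Serganova map `S₁` to `ℤ^M × ℤ^N` (for `M + 1 ≤ N`),
acting only on `λ` and the first `M+1` entries of `θ` and leaving `θ_{M+2},…,θ_N`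
unchanged. -/
def Shat (p M N : ℕ) (h : M + 1 ≤ N) (s : NState M N) : NState M N :=
  ((order1 M).map fun ij => (ij.1, ij.2.castLE h)).foldl (fun s ij => nStep p M N ij s) s

/-- The set `Â ⊆ ℤ^M × ℤ^N` of dominant pairs: `λ_1 ≥ … ≥ λ_M`, `θ_1 ≥ … ≥ θ_N`. -/
def domAhat (M N : ℕ) : Set (NState M N) := {s | Antitone s.1 ∧ Antitone s.2}

/-- The set `𝕄̂ ⊆ ℤ^M × ℤ^N`: dominant pairs such that (in 1-based terms)
for `1 ≤ i ≤ M`, `θ_i = θ_{i+1} → p ∣ θ_i + λ_i`, and for `2 ≤ i ≤ M`,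
`λ_{i-1} = λ_i → p ∣ θ_i + λ_i`. -/
def setMhat (p M N : ℕ) (h : M + 1 ≤ N) : Set (NState M N) :=
  {s | Antitone s.1 ∧ Antitone s.2 ∧
    (∀ (i : ℕ) (hi : i < M),
      s.2 ⟨i, by omega⟩ = s.2 ⟨i + 1, by omega⟩ →
        (p : ℤ) ∣ s.2 ⟨i, by omega⟩ + s.1 ⟨i, hi⟩) ∧
    (∀ (i : ℕ) (hi : i + 1 < M),
      s.1 ⟨i, by omega⟩ = s.1 ⟨i + 1, hi⟩ →
        (p : ℤ) ∣ s.2 ⟨i + 1, by omega⟩ + s.1 ⟨i + 1, hi⟩)}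

namespace Serganova

/-- `(λ, θ)` indexed by all of `ℕ`, so that `tail` can drop the first row and column. -/
abbrev State := (ℕ → ℤ) × (ℕ → ℤ)

section Move

variable (p : ℕ) (ε : ℤ)

/-- `move p 1` is the Serganova step and `move p (-1)` undoes it. -/
def move (i j : ℕ) (s : State) : State :=
  if (p : ℤ) ∣ s.1 i + s.2 j then s
  else (update s.1 i (s.1 i - ε), update s.2 j (s.2 j + ε))

def run (L : List (ℕ × ℕ)) (s : State) : State :=
  L.foldl (fun s q => move p ε q.1 q.2 s) s

variable {p ε} {i j n : ℕ} {s : State}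

theorem move_of_dvd (h : (p : ℤ) ∣ s.1 i + s.2 j) : move p ε i j s = s := if_pos h

theorem move_fst_self_of_not_dvd (h : ¬(p : ℤ) ∣ s.1 i + s.2 j) :
    (move p ε i j s).1 i = s.1 i - ε := by
  simp [move, h]

theorem move_snd_self_of_not_dvd (h : ¬(p : ℤ) ∣ s.1 i + s.2 j) :
    (move p ε i j s).2 j = s.2 j + ε := by
  simp [move, h]

theorem move_fst_of_ne (h : n ≠ i) : (move p ε i j s).1 n = s.1 n := by
  unfold move; split_ifs <;> simp [h]

theorem move_snd_of_ne (h : n ≠ j) : (move p ε i j s).2 n = s.2 n := by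
  unfold move; split_ifs <;> simp [h]

theorem move_fst_apply :
    (move p ε i j s).1 n = if n = i ∧ ¬(p : ℤ) ∣ s.1 i + s.2 j then s.1 n - ε else s.1 n := by
  unfold move; split_ifs <;> simp_all

theorem move_snd_apply :
    (move p ε i j s).2 n = if n = j ∧ ¬(p : ℤ) ∣ s.1 i + s.2 j then s.2 n + ε else s.2 n := by
  unfold move; split_ifs <;> simp_all

theorem move_comm {i' j' : ℕ} (hi : i ≠ i') (hj : j ≠ j') :
    move p ε i j (move p ε i' j' s) = move p ε i' j' (move p ε i j s) := by
  ext n <;>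
  · simp only [move_fst_apply, move_snd_apply, hi, hj, hi.symm, hj.symm, false_and, if_false]
    split_ifs <;> simp_all

theorem move_neg_move : move p (-ε) i j (move p ε i j s) = s := by
  by_cases h : (p : ℤ) ∣ s.1 i + s.2 j
  · rw [move_of_dvd h, move_of_dvd h]
  · simp [move, h]

theorem mul_move_fst_ge (hε : ε = 1 ∨ ε = -1) : ε * s.1 n - 1 ≤ ε * (move p ε i j s).1 n := by
  rw [move_fst_apply]; split_ifs <;> rcases hε with rfl | rfl <;> omega

theorem mul_move_snd_le (hε : ε = 1 ∨ ε = -1) : ε * (move p ε i j s).2 n ≤ ε * s.2 n + 1 := by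
  rw [move_snd_apply]; split_ifs <;> rcases hε with rfl | rfl <;> omega

/-- At an equal pair, if the first step does not fire then neither does the second. -/
theorem fst_le_fst_move_move (hε : ε = 1 ∨ ε = -1) {a b : ℕ} (hab : a ≠ b)
    (h : ε * s.1 a ≤ ε * s.1 b) :
    ε * (move p ε b j (move p ε a j s)).1 a ≤ ε * (move p ε b j (move p ε a j s)).1 b := by
  have hb : ε * s.1 b - 1 ≤ ε * (move p ε b j (move p ε a j s)).1 b := by
    simpa [move_fst_of_ne hab.symm] using mul_move_fst_ge hε (s := move p ε a j s) (n := b)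
  rw [move_fst_of_ne hab]
  by_cases hd : (p : ℤ) ∣ s.1 a + s.2 j
  · rw [move_of_dvd hd] at hb ⊢
    rcases h.eq_or_lt with heq | hlt
    · have : s.1 a = s.1 b := by rcases hε with rfl | rfl <;> omega
      rw [move_of_dvd (by rwa [← this])]
      exact h
    · omega
  · rw [move_fst_self_of_not_dvd hd]
    rcases hε with rfl | rfl <;> omega

theorem snd_le_snd_move_move (hε : ε = 1 ∨ ε = -1) {a b : ℕ} (hab : a ≠ b)
    (h : ε * s.2 b ≤ ε * s.2 a) :
    ε * (move p ε i b (move p ε i a s)).2 b ≤ ε * (move p ε i b (move p ε i a s)).2 a := by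
  have hb : ε * (move p ε i b (move p ε i a s)).2 b ≤ ε * s.2 b + 1 := by
    simpa [move_snd_of_ne hab.symm] using mul_move_snd_le hε (s := move p ε i a s) (n := b)
  rw [move_snd_of_ne hab]
  by_cases hd : (p : ℤ) ∣ s.1 i + s.2 a
  · rw [move_of_dvd hd] at hb ⊢
    rcases h.eq_or_lt with heq | hlt
    · have : s.2 b = s.2 a := by rcases hε with rfl | rfl <;> omega
      rw [move_of_dvd (by rwa [this])]
      exact h
    · omega
  · rw [move_snd_self_of_not_dvd hd]
    rcases hε with rfl | rfl <;> omega

end Move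

section Run

variable {p : ℕ} {ε : ℤ} {i j n : ℕ} {s : State} {L : List (ℕ × ℕ)}

@[simp] theorem run_nil : run p ε [] s = s := rfl

@[simp] theorem run_cons (q : ℕ × ℕ) : run p ε (q :: L) s = run p ε L (move p ε q.1 q.2 s) := rfl

@[simp] theorem run_append (L' : List (ℕ × ℕ)) :
    run p ε (L ++ L') s = run p ε L' (run p ε L s) :=
  List.foldl_append ..

theorem run_neg_run_reverse : run p (-ε) L.reverse (run p ε L s) = s := by
  induction L generalizing s with
  | nil => rfl
  | cons q L ih => simp [ih, move_neg_move]

theorem run_run_neg_reverse : run p ε L (run p (-ε) L.reverse s) = s := by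
  simpa using run_neg_run_reverse (ε := -ε) (L := L.reverse) (s := s)

theorem run_fst_of_forall_ne (h : ∀ q ∈ L, q.1 ≠ n) : (run p ε L s).1 n = s.1 n := by
  induction L generalizing s with
  | nil => rfl
  | cons q L ih =>
    simp only [List.forall_mem_cons] at h
    rw [run_cons, ih h.2, move_fst_of_ne h.1.symm]

theorem run_snd_of_forall_ne (h : ∀ q ∈ L, q.2 ≠ n) : (run p ε L s).2 n = s.2 n := by
  induction L generalizing s with
  | nil => rfl
  | cons q L ih =>
    simp only [List.forall_mem_cons] at h
    rw [run_cons, ih h.2, move_snd_of_ne h.1.symm]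

theorem run_move_comm (h : ∀ q ∈ L, q.1 ≠ i ∧ q.2 ≠ j) :
    run p ε L (move p ε i j s) = move p ε i j (run p ε L s) := by
  induction L generalizing s with
  | nil => rfl
  | cons q L ih =>
    simp only [List.forall_mem_cons] at h
    rw [run_cons, run_cons, move_comm h.1.1 h.1.2, ih h.2]

def shift (q : ℕ × ℕ) : ℕ × ℕ := (q.1 + 1, q.2 + 1)

def tail (s : State) : State := (fun n => s.1 (n + 1), fun n => s.2 (n + 1))

theorem tail_move : tail (move p ε (i + 1) (j + 1) s) = move p ε i j (tail s) := by
  ext n <;> simp [tail, move_fst_apply, move_snd_apply]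

theorem tail_run_map_shift : tail (run p ε (L.map shift) s) = run p ε L (tail s) := by
  induction L generalizing s with
  | nil => rfl
  | cons q L ih => rw [List.map_cons, run_cons, run_cons, ih, shift, tail_move]

theorem ne_zero_of_mem_map_shift {q : ℕ × ℕ} (hq : q ∈ L.map shift) : q.1 ≠ 0 ∧ q.2 ≠ 0 := by
  obtain ⟨q, -, rfl⟩ := List.mem_map.1 hq
  simp [shift]

theorem two_le_of_mem_map_shift_map_shift {q : ℕ × ℕ} (hq : q ∈ (L.map shift).map shift) :
    2 ≤ q.1 ∧ 2 ≤ q.2 := by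
  obtain ⟨q', hq', rfl⟩ := List.mem_map.1 hq
  obtain ⟨q'', -, rfl⟩ := List.mem_map.1 hq'
  simp [shift]

end Run

section Column

variable {p : ℕ} {ε : ℤ} {i j n : ℕ} {s : State} {rows : List ℕ}

theorem forall_mem_map_fst_ne (hn : n ∉ rows) : ∀ q ∈ rows.map (·, j), q.1 ≠ n := by
  simp only [List.mem_map]
  rintro _ ⟨x, hx, rfl⟩
  exact ne_of_mem_of_not_mem hx hn

theorem fst_run_column_of_not_mem (hn : n ∉ rows) :
    (run p ε (rows.map (·, j)) s).1 n = s.1 n :=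
  run_fst_of_forall_ne (forall_mem_map_fst_ne hn)

theorem snd_run_column_of_ne (hn : n ≠ j) : (run p ε (rows.map (·, j)) s).2 n = s.2 n :=
  run_snd_of_forall_ne (by simpa using fun _ _ => hn.symm)

theorem run_column_move_comm {k : ℕ} (hi : i ∉ rows) (hj : j ≠ k) :
    run p ε (rows.map (·, k)) (move p ε i j s) = move p ε i j (run p ε (rows.map (·, k)) s) :=
  run_move_comm fun q hq => ⟨forall_mem_map_fst_ne hi q hq, by
    obtain ⟨_, _, rfl⟩ := List.mem_map.1 hq; exact hj.symm⟩

theorem isChain_run_column (hε : ε = 1 ∨ ε = -1) (hrows : rows.Nodup)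
    (h : (rows.map s.1).IsChain fun x y => ε * x ≤ ε * y) :
    (rows.map (run p ε (rows.map (·, j)) s).1).IsChain fun x y => ε * x ≤ ε * y := by
  induction rows generalizing s with
  | nil => simp
  | cons a rest ih =>
    rcases rest with _ | ⟨b, rest⟩
    · simp
    obtain ⟨ha, hrest⟩ := List.nodup_cons.1 hrows
    have hab : a ≠ b := (ne_of_mem_of_not_mem List.mem_cons_self ha).symm
    set s₁ := move p ε a j s
    have hs₁ : ∀ x ∈ b :: rest, s₁.1 x = s.1 x :=
      fun x hx => move_fst_of_ne (ne_of_mem_of_not_mem hx ha)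
    rw [List.map_cons, List.map_cons, List.isChain_cons_cons] at h
    have hIH := ih hrest (s := s₁) (by rw [List.map_congr_left hs₁, List.map_cons]; exact h.2)
    change (List.map (run p ε ((b :: rest).map (·, j)) s₁).1 (a :: b :: rest)).IsChain _
    set r := run p ε ((b :: rest).map (·, j)) s₁
    have hra : r.1 a = s₁.1 a := fst_run_column_of_not_mem ha
    have hrb : r.1 b = (move p ε b j s₁).1 b :=
      fst_run_column_of_not_mem (List.nodup_cons.1 hrest).1
    rw [List.map_cons, List.map_cons, List.isChain_cons_cons]
    refine ⟨?_, by rwa [← List.map_cons]⟩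
    rw [hra, hrb, ← move_fst_of_ne (i := b) (j := j) (s := s₁) hab]
    exact fst_le_fst_move_move hε hab h.1

theorem snd_run_column_le (hε : ε = 1 ∨ ε = -1) {a b : ℕ} (hab : a ≠ b) (hrows : rows.Nodup)
    (h : ε * s.2 b ≤ ε * s.2 a) :
    ε * (run p ε (rows.map (·, b)) (run p ε (rows.map (·, a)) s)).2 b ≤
      ε * (run p ε (rows.map (·, a)) s).2 a := by
  induction rows generalizing s with
  | nil => exact h
  | cons r rest ih =>
    obtain ⟨hr, hrest⟩ := List.nodup_cons.1 hrows
    simp only [List.map_cons, run_cons]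
    rw [← run_column_move_comm hr hab.symm, ← move_snd_of_ne (i := r) (j := b) hab,
      ← run_column_move_comm hr hab.symm]
    exact ih hrest (snd_le_snd_move_move hε hab h)

def AntitoneBelow (n : ℕ) (f : ℕ → ℤ) : Prop := ∀ i, i + 1 < n → f (i + 1) ≤ f i

theorem antitoneBelow_run_column_down (h : AntitoneBelow n s.1) :
    AntitoneBelow n (run p 1 ((List.range n).reverse.map (·, j)) s).1 := by
  have key : ∀ g : ℕ → ℤ, AntitoneBelow n g ↔
      ((List.range n).reverse.map g).IsChain fun x y => 1 * x ≤ 1 * y := by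
    intro g
    rw [List.map_reverse, List.isChain_reverse, List.isChain_map, List.isChain_range]
    simp only [AntitoneBelow, one_mul]
    exact ⟨fun h m hm => h m (by omega), fun h m hm => h m (by omega)⟩
  exact (key _).2 (isChain_run_column (Or.inl rfl) (List.nodup_reverse.2 List.nodup_range)
    ((key _).1 h))

theorem antitoneBelow_run_column_up (h : AntitoneBelow n s.1) :
    AntitoneBelow n (run p (-1) ((List.range n).map (·, j)) s).1 := by
  have key : ∀ g : ℕ → ℤ, AntitoneBelow n g ↔
      ((List.range n).map g).IsChain fun x y => -1 * x ≤ -1 * y := by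
    intro g
    rw [List.isChain_map, List.isChain_range]
    simp only [AntitoneBelow, neg_one_mul, neg_le_neg_iff]
    exact ⟨fun h m hm => h m (by omega), fun h m hm => h m (by omega)⟩
  exact (key _).2 (isChain_run_column (Or.inr rfl) List.nodup_range ((key _).1 h))

end Column

section Order

variable {p : ℕ} {ε : ℤ}

def order (M : ℕ) : List (ℕ × ℕ) :=
  (List.range M).flatMap fun j => ((List.range M).reverse.filter (j ≤ ·)).map (·, j)

theorem order_succ (M : ℕ) :
    order (M + 1) = (List.range (M + 1)).reverse.map (·, 0) ++ (order M).map shift := by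
  rw [order, List.range_succ_eq_map, List.flatMap_cons, List.flatMap_map, order, List.map_flatMap]
  congr 1
  · simp
  · refine List.flatMap_congr fun j _ => ?_
    simp [List.filter_map, shift, Function.comp_def]

theorem range_succ_reverse (M : ℕ) :
    (List.range (M + 1)).reverse = (List.range' 1 M).reverse ++ [0] := by
  rw [List.range_eq_range', List.range'_succ, List.reverse_cons]

/-- For `M = 0` both sides are empty, as `0 - 1 = 0`. -/
theorem order_map_shift (M : ℕ) : (order M).map shift =
    (List.range' 1 M).reverse.map (·, 1) ++ ((order (M - 1)).map shift).map shift := by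
  rcases M with _ | M
  · rfl
  · rw [order_succ, List.map_append, List.map_map, Nat.add_sub_cancel]
    simp [shift, List.range'_eq_map_range, List.map_reverse, Function.comp_def, add_comm]

theorem run_order_succ (M : ℕ) (s : State) :
    run p ε (order (M + 1)) s = run p ε ((order M).map shift)
      (move p ε 0 0 (run p ε ((List.range' 1 M).reverse.map (·, 0)) s)) := by
  rw [order_succ, range_succ_reverse]
  simp

theorem run_order_succ_reverse (M : ℕ) (s : State) :
    run p ε (order (M + 1)).reverse s = run p ε ((List.range' 1 M).map (·, 0))
      (move p ε 0 0 (run p ε ((order M).map shift).reverse s)) := by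
  rw [order_succ, range_succ_reverse]
  simp

theorem fst_zero_run_order_succ (M : ℕ) (t : State) :
    (run p ε (order (M + 1)) t).1 0 = t.1 0 - ε ∨
      ((run p ε (order (M + 1)) t).1 0 = t.1 0 ∧
        (p : ℤ) ∣ (run p ε (order (M + 1)) t).2 0 + (run p ε (order (M + 1)) t).1 0) := by
  rw [run_order_succ, run_fst_of_forall_ne fun q hq => (ne_zero_of_mem_map_shift hq).1,
    run_snd_of_forall_ne fun q hq => (ne_zero_of_mem_map_shift hq).2]
  set x := run p ε ((List.range' 1 M).reverse.map (·, 0)) t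
  have hx : x.1 0 = t.1 0 := fst_run_column_of_not_mem (by simp)
  by_cases hd : (p : ℤ) ∣ x.1 0 + x.2 0
  · rw [move_of_dvd hd, ← hx, add_comm]
    exact Or.inr ⟨rfl, hd⟩
  · rw [move_fst_self_of_not_dvd hd, hx]
    exact Or.inl rfl

theorem fst_zero_run_order_succ_reverse (M : ℕ) (t : State) :
    (¬(p : ℤ) ∣ t.2 0 + t.1 0 ∧ (run p ε (order (M + 1)).reverse t).1 0 = t.1 0 - ε) ∨
      ((p : ℤ) ∣ t.2 0 + t.1 0 ∧ (run p ε (order (M + 1)).reverse t).1 0 = t.1 0) := by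
  rw [run_order_succ_reverse, fst_run_column_of_not_mem (by simp)]
  set x := run p ε ((order M).map shift).reverse t
  have hx₁ : x.1 0 = t.1 0 :=
    run_fst_of_forall_ne fun q hq => (ne_zero_of_mem_map_shift (List.mem_reverse.1 hq)).1
  have hx₂ : x.2 0 = t.2 0 :=
    run_snd_of_forall_ne fun q hq => (ne_zero_of_mem_map_shift (List.mem_reverse.1 hq)).2
  by_cases hd : (p : ℤ) ∣ x.1 0 + x.2 0
  · rw [move_of_dvd hd, hx₁]
    exact Or.inr ⟨by rwa [add_comm, ← hx₁, ← hx₂], rfl⟩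
  · rw [move_fst_self_of_not_dvd hd, hx₁]
    exact Or.inl ⟨by rwa [add_comm, ← hx₁, ← hx₂], rfl⟩

/-- The step `(0, 0)` commutes with the pass along column `1`, after which `θ_1` is final. -/
theorem snd_one_run_order_map_shift_le (M : ℕ) (s : State) (h : s.2 1 ≤ s.2 0) :
    (run p 1 ((order M).map shift)
      (move p 1 0 0 (run p 1 ((List.range' 1 M).reverse.map (·, 0)) s))).2 1 ≤
      (run p 1 ((List.range' 1 M).reverse.map (·, 0)) s).2 0 := by
  rw [order_map_shift, run_append,
    run_snd_of_forall_ne fun q hq => by have := (two_le_of_mem_map_shift_map_shift hq).2; omega,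
    run_column_move_comm (by simp) zero_ne_one, move_snd_of_ne one_ne_zero]
  simpa using snd_run_column_le (p := p) (Or.inl rfl) zero_ne_one
    (List.nodup_reverse.2 List.nodup_range') (by simpa using h)

theorem snd_one_run_order_map_shift_reverse_le (M : ℕ) (s : State) (h : s.2 1 ≤ s.2 0)
    (hdvd : s.2 0 = s.2 1 → (p : ℤ) ∣ s.2 0 + s.1 0) :
    (run p (-1) ((order M).map shift).reverse s).2 1 ≤
      (run p (-1) ((List.range' 1 M).map (·, 0))
        (move p (-1) 0 0 (run p (-1) ((order M).map shift).reverse s))).2 0 := by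
  have hcol : ((List.range' 1 M).reverse.map (·, 1)).reverse = (List.range' 1 M).map (·, 1) := by
    rw [List.map_reverse, List.reverse_reverse]
  rw [order_map_shift, List.reverse_append, run_append, hcol,
    ← run_column_move_comm (by simp) zero_ne_one,
    ← move_snd_of_ne (p := p) (ε := -1) (i := 0) (j := 0) one_ne_zero,
    ← run_column_move_comm (by simp) zero_ne_one]
  set v := run p (-1) (((order (M - 1)).map shift).map shift).reverse s
  have hv : ∀ n ≤ 1, v.1 n = s.1 n ∧ v.2 n = s.2 n := fun n hn =>
    have hq : ∀ q ∈ (((order (M - 1)).map shift).map shift).reverse, n < q.1 ∧ n < q.2 :=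
      fun q hq => by
        have := two_le_of_mem_map_shift_map_shift (List.mem_reverse.1 hq); omega
    ⟨run_fst_of_forall_ne fun q hq' => (hq q hq').1.ne',
      run_snd_of_forall_ne fun q hq' => (hq q hq').2.ne'⟩
  have key := snd_run_column_le (p := p) (Or.inr rfl) one_ne_zero List.nodup_range'
    (rows := List.range' 1 M) (s := move p (-1) 0 0 v) ?_
  · linarith
  rw [move_snd_of_ne one_ne_zero, (hv 1 le_rfl).2]
  by_cases hd : (p : ℤ) ∣ v.1 0 + v.2 0
  · rw [move_of_dvd hd, (hv 0 zero_le_one).2]; linarith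
  · rw [move_snd_self_of_not_dvd hd, (hv 0 zero_le_one).2]
    rw [(hv 0 zero_le_one).1, (hv 0 zero_le_one).2, add_comm] at hd
    have : s.2 1 ≠ s.2 0 := fun heq => hd (hdvd heq.symm)
    omega

theorem snd_head_run_order_succ (M : ℕ) (s : State) (h : s.2 1 ≤ s.2 0) :
    (run p 1 (order (M + 1)) s).2 1 ≤ (run p 1 (order (M + 1)) s).2 0 ∧
      ((run p 1 (order (M + 1)) s).2 0 = (run p 1 (order (M + 1)) s).2 1 →
        (p : ℤ) ∣ (run p 1 (order (M + 1)) s).2 0 + (run p 1 (order (M + 1)) s).1 0) := by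
  have hcouple := snd_one_run_order_map_shift_le (p := p) M s h
  rw [run_order_succ, run_fst_of_forall_ne fun q hq => (ne_zero_of_mem_map_shift hq).1,
    run_snd_of_forall_ne (n := 0) fun q hq => (ne_zero_of_mem_map_shift hq).2]
  set sA := run p 1 ((List.range' 1 M).reverse.map (·, 0)) s
  by_cases hd : (p : ℤ) ∣ sA.1 0 + sA.2 0
  · rw [move_of_dvd hd] at hcouple ⊢
    exact ⟨hcouple, fun _ => by rwa [add_comm]⟩
  · have : (move p 1 0 0 sA).2 0 = sA.2 0 + 1 := move_snd_self_of_not_dvd hd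
    exact ⟨by linarith, fun _ => by linarith⟩

theorem fst_one_run_order_map_shift (M : ℕ) (s : State) (h : s.1 1 ≤ s.1 0) :
    (run p 1 ((order (M + 1)).map shift) s).1 1 ≤ s.1 0 ∧
      (s.1 0 = (run p 1 ((order (M + 1)).map shift) s).1 1 →
        (p : ℤ) ∣ (run p 1 ((order (M + 1)).map shift) s).2 1 +
          (run p 1 ((order (M + 1)).map shift) s).1 1) := by
  have h' := fst_zero_run_order_succ (p := p) (ε := 1) M (tail s)
  rw [← tail_run_map_shift] at h'
  simp only [tail] at h'
  rcases h' with h' | h'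
  · exact ⟨by linarith, fun _ => by linarith⟩
  · exact ⟨by linarith, fun _ => h'.2⟩

theorem fst_one_run_order_map_shift_reverse_le (M : ℕ) (s : State) (h : s.1 1 ≤ s.1 0)
    (hdvd : s.1 0 = s.1 1 → (p : ℤ) ∣ s.2 1 + s.1 1) :
    (run p (-1) ((order (M + 1)).map shift).reverse s).1 1 ≤ s.1 0 := by
  have h' := fst_zero_run_order_succ_reverse (p := p) (ε := -1) M (tail s)
  rw [← tail_run_map_shift, List.map_reverse] at h'
  simp only [tail] at h'
  rcases h.eq_or_lt with heq | hlt
  · rcases h' with h' | h'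
    · exact absurd (hdvd heq.symm) h'.1
    · exact h'.2.trans_le heq.le
  · rcases h' with h' | h' <;> linarith [h'.2]

end Order

section Dominance

variable {p M N n : ℕ} {s : State}

def Dominant (M N : ℕ) (s : State) : Prop := AntitoneBelow M s.1 ∧ AntitoneBelow N s.2

def Admissible (p M N : ℕ) (s : State) : Prop :=
  Dominant M N s ∧ (∀ i < M, s.2 i = s.2 (i + 1) → (p : ℤ) ∣ s.2 i + s.1 i) ∧
    ∀ i, i + 1 < M → s.1 i = s.1 (i + 1) → (p : ℤ) ∣ s.2 (i + 1) + s.1 (i + 1)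

theorem antitoneBelow_succ_iff {f : ℕ → ℤ} :
    AntitoneBelow (n + 1) f ↔ (0 < n → f 1 ≤ f 0) ∧ AntitoneBelow n fun i => f (i + 1) := by
  refine ⟨fun h => ⟨fun hn => h 0 (by omega), fun i hi => h (i + 1) (by omega)⟩,
    fun ⟨h₀, h⟩ i hi => ?_⟩
  rcases i with _ | i
  exacts [h₀ (by omega), h i (by omega)]

theorem dominant_succ_iff :
    Dominant (M + 1) (N + 1) s ↔
      (0 < M → s.1 1 ≤ s.1 0) ∧ (0 < N → s.2 1 ≤ s.2 0) ∧ Dominant M N (tail s) := by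
  simp only [Dominant, antitoneBelow_succ_iff, tail]
  tauto

theorem admissible_succ_iff :
    Admissible p (M + 1) (N + 1) s ↔
      (0 < M → s.1 1 ≤ s.1 0) ∧ (0 < N → s.2 1 ≤ s.2 0) ∧
        (s.2 0 = s.2 1 → (p : ℤ) ∣ s.2 0 + s.1 0) ∧
        (0 < M → s.1 0 = s.1 1 → (p : ℤ) ∣ s.2 1 + s.1 1) ∧ Admissible p M N (tail s) := by
  simp only [Admissible, dominant_succ_iff, Nat.forall_lt_succ_left', tail]
  constructor
  · rintro ⟨⟨hl, ht, hd⟩, ⟨h₀, h₁⟩, h₂⟩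
    exact ⟨hl, ht, h₀, fun _ => h₂ 0 (by omega), hd, h₁, fun i hi => h₂ (i + 1) (by omega)⟩
  · rintro ⟨hl, ht, h₀, h₂₀, hd, h₁, h₂⟩
    refine ⟨⟨hl, ht, hd⟩, ⟨h₀, h₁⟩, fun i hi => ?_⟩
    rcases i with _ | i
    exacts [h₂₀ (by omega), h₂ i (by omega)]

theorem admissible_run_order (hN : M + 1 ≤ N) (hs : Dominant M N s) :
    Admissible p M N (run p 1 (order M) s) := by
  induction M generalizing N s with
  | zero => exact ⟨hs, by simp, by simp⟩
  | succ M ih =>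
    obtain ⟨N, rfl⟩ : ∃ N', N = N' + 1 := ⟨N - 1, by omega⟩
    obtain ⟨-, hs₀, hs_tail⟩ := dominant_succ_iff.1 hs
    have hcol := antitoneBelow_run_column_down (p := p) (j := 0) hs.1
    rw [range_succ_reverse, List.map_append, run_append] at hcol
    obtain ⟨hcol₀, hcol_tail⟩ := antitoneBelow_succ_iff.1 hcol
    have hsnd := snd_head_run_order_succ (p := p) M s (hs₀ (by omega))
    rw [run_order_succ] at hsnd ⊢
    set s₁ := move p 1 0 0 (run p 1 ((List.range' 1 M).reverse.map (·, 0)) s)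
    set r := run p 1 ((order M).map shift) s₁
    have hs₁ : ∀ n ≠ 0, s₁.2 n = s.2 n := fun n hn => by
      rw [move_snd_of_ne hn, snd_run_column_of_ne hn]
    have hfst : 0 < M → r.1 1 ≤ r.1 0 ∧ (r.1 0 = r.1 1 → (p : ℤ) ∣ r.2 1 + r.1 1) := by
      intro hM
      obtain ⟨M, rfl⟩ := Nat.exists_eq_add_one_of_ne_zero hM.ne'
      rw [run_fst_of_forall_ne fun q hq => (ne_zero_of_mem_map_shift hq).1]
      exact fst_one_run_order_map_shift M s₁ (hcol₀ hM)
    refine admissible_succ_iff.2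
      ⟨fun hM => (hfst hM).1, fun _ => hsnd.1, hsnd.2, fun hM => (hfst hM).2, ?_⟩
    rw [tail_run_map_shift]
    exact ih (by omega)
      ⟨hcol_tail, fun i hi => by simpa [tail, hs₁] using hs_tail.2 i hi⟩

theorem dominant_run_neg_order_reverse (hN : M + 1 ≤ N) (hs : Admissible p M N s) :
    Dominant M N (run p (-1) (order M).reverse s) := by
  induction M generalizing N s with
  | zero => exact hs.1
  | succ M ih =>
    obtain ⟨N, rfl⟩ : ∃ N', N = N' + 1 := ⟨N - 1, by omega⟩
    obtain ⟨hs_one, hs_zero, hs_dvd_zero, hs_dvd_one, hs_tail⟩ := admissible_succ_iff.1 hs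
    have hcouple := snd_one_run_order_map_shift_reverse_le (p := p) M s (hs_zero (by omega))
      hs_dvd_zero
    rw [run_order_succ_reverse]
    set u := run p (-1) ((order M).map shift).reverse s
    have hIH : Dominant M N (tail u) := by
      have := ih (by omega) hs_tail
      rwa [← tail_run_map_shift, List.map_reverse] at this
    have hu_one : 0 < M → u.1 1 ≤ u.1 0 := by
      intro hM
      obtain ⟨M, rfl⟩ := Nat.exists_eq_add_one_of_ne_zero hM.ne'
      rw [run_fst_of_forall_ne (n := 0) fun q hq =>
        (ne_zero_of_mem_map_shift (List.mem_reverse.1 hq)).1]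
      exact fst_one_run_order_map_shift_reverse_le M s (hs_one hM) (hs_dvd_one hM)
    have hθ : ∀ n ≠ 0,
        (run p (-1) ((List.range' 1 M).map (·, 0)) (move p (-1) 0 0 u)).2 n = u.2 n :=
      fun n hn => by rw [snd_run_column_of_ne hn, move_snd_of_ne hn]
    refine ⟨?_, antitoneBelow_succ_iff.2 ⟨fun _ => hθ 1 one_ne_zero ▸ hcouple, fun i hi => ?_⟩⟩
    · have h := antitoneBelow_run_column_up (p := p) (j := 0)
        (antitoneBelow_succ_iff.2 ⟨hu_one, hIH.1⟩)
      rwa [List.range_eq_range', List.range'_succ, List.map_cons, run_cons] at h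
    · dsimp only
      rw [hθ _ (by omega), hθ _ (by omega)]
      exact hIH.2 i hi

end Dominance

section Restrict

variable {p M N : ℕ}

def restrict (M N : ℕ) (t : State) : NState M N := (fun i => t.1 i, fun j => t.2 j)

def extend (x : NState M N) : State :=
  (fun n => if h : n < M then x.1 ⟨n, h⟩ else 0, fun n => if h : n < N then x.2 ⟨n, h⟩ else 0)

theorem restrict_extend (x : NState M N) : restrict M N (extend x) = x := by
  ext <;> simp [restrict, extend]

theorem restrict_move (q : Fin M × Fin N) (t : State) :
    restrict M N (move p 1 q.1 q.2 t) = nStep p M N q (restrict M N t) := by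
  unfold nStep
  split_ifs with h
  · rw [move_of_dvd h]
  · simp only [restrict] at h
    ext n <;> simp [restrict, move_fst_apply, move_snd_apply, h, update_apply, Fin.ext_iff] <;>
      split_ifs with hn <;> simp [hn]

theorem restrict_run (L : List (Fin M × Fin N)) (t : State) :
    restrict M N (run p 1 (L.map fun q => (q.1.val, q.2.val)) t) =
      L.foldl (fun s q => nStep p M N q s) (restrict M N t) := by
  induction L generalizing t with
  | nil => rfl
  | cons q L ih => rw [List.map_cons, run_cons, ih, List.foldl_cons, restrict_move]

theorem order_eq_map_order1 (M : ℕ) : order M = (order1 M).map fun q => (q.1.val, q.2.val) := by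
  simp only [order, order1, List.map_flatMap, List.map_map]
  rw [← List.map_coe_finRange_eq_range, List.flatMap_map]
  refine List.flatMap_congr fun j _ => ?_
  rw [← List.map_reverse, List.filter_map, List.map_map]
  rfl

theorem restrict_run_order (h : M + 1 ≤ N) (t : State) :
    restrict M N (run p 1 (order M) t) = Shat p M N h (restrict M N t) := by
  rw [Shat, ← restrict_run, List.map_map, order_eq_map_order1]
  rfl

theorem antitone_fin_iff {n : ℕ} {f : ℕ → ℤ} :
    Antitone (fun i : Fin n => f i) ↔ AntitoneBelow n f := by
  rcases n with _ | n
  · simp [AntitoneBelow, Subsingleton.antitone]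
  · rw [Fin.antitone_iff_succ_le]
    exact ⟨fun h i hi => h ⟨i, by omega⟩, fun h i => h i (by omega)⟩

theorem restrict_mem_domAhat_iff {t : State} :
    restrict M N t ∈ domAhat M N ↔ Dominant M N t := by
  simp only [domAhat, restrict, Set.mem_ofPred_eq, antitone_fin_iff, Dominant]

theorem restrict_mem_setMhat_iff (h : M + 1 ≤ N) {t : State} :
    restrict M N t ∈ setMhat p M N h ↔ Admissible p M N t := by
  simp only [setMhat, restrict, Set.mem_ofPred_eq, antitone_fin_iff, Admissible, Dominant,
    and_assoc]

end Restrict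

end Serganova

theorem serganova_image_eq_general_general (p M N : ℕ) (hN : M + 1 < N) :
    Shat p M N hN.le '' domAhat M N = setMhat p M N hN.le := by
  open Serganova in
  ext x
  constructor
  · rintro ⟨y, hy, rfl⟩
    rw [← restrict_extend y, restrict_mem_domAhat_iff] at hy
    rw [← restrict_extend y, ← restrict_run_order, restrict_mem_setMhat_iff]
    exact admissible_run_order hN.le hy
  · intro hx
    rw [← restrict_extend x, restrict_mem_setMhat_iff] at hx
    refine ⟨restrict M N (run p (-1) (order M).reverse (extend x)),
      restrict_mem_domAhat_iff.2 (dominant_run_neg_order_reverse hN.le hx), ?_⟩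
    rw [← restrict_run_order, run_run_neg_reverse, restrict_extend]

/-- For `N > M + 1`, the extended Serganova map satisfies
`Ŝ(Â) = 𝕄̂`. -/
theorem serganova_image_eq_general (p M N : ℕ) (hp : p.Prime) (hN : M + 1 < N) :
    Shat p M N hN.le '' domAhat M N = setMhat p M N hN.le :=
  serganova_image_eq_general_general p M N hN
end

section
/- Let p be a prime and M ≥ 1 an integer, and let (λ,θ) ∈ A. Suppose Version 1 of the Serganova algorithm is applied to (λ,θ), and let i with 1 ≤ i ≤ M be fixed. After the step processing the pair (i,i) (the last step of the Version 1 order whose first index equals i), the entries λ_{i−1} (if i ≥ 2), λ_i, and θ_i are never modified by any later step; consequently their values after step (i,i) equal the corresponding entries of S₁(λ,θ). -/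
open Function

/-- The state of the Serganova algorithm: a pair `(λ, θ) ∈ ℤ^M × ℤ^{M+1}`.
Indices are 0-based, so the paper's `λ_i` (for `1 ≤ i ≤ M`) is `s.1 ⟨i-1,_⟩`
and the paper's `θ_j` (for `1 ≤ j ≤ M+1`) is `s.2 ⟨j-1,_⟩`. -/
abbrev SState (M : ℕ) := (Fin M → ℤ) × (Fin (M + 1) → ℤ)

/-- One step of the Serganova algorithm, processing the (0-based) pair `(i, j)`:
if `λ_i + θ_j ≡ 0 (mod p)` nothing changes, otherwise `λ_i` is decreased by `1`
and `θ_j` is increased by `1`. -/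
def sStep (p M : ℕ) (ij : Fin M × Fin (M + 1)) (s : SState M) : SState M :=
  if (p : ℤ) ∣ s.1 ij.1 + s.2 ij.2 then s
  else (Function.update s.1 ij.1 (s.1 ij.1 - 1),
        Function.update s.2 ij.2 (s.2 ij.2 + 1))

/-- One step of the inverse algorithm, processing the (0-based) pair `(i, j)`:
if `λ_i + θ_j ≡ 0 (mod p)` nothing changes, otherwise `λ_i` is increased by `1`
and `θ_j` is decreased by `1`. -/
def tStep (p M : ℕ) (ij : Fin M × Fin (M + 1)) (s : SState M) : SState M :=
  if (p : ℤ) ∣ s.1 ij.1 + s.2 ij.2 then s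
  else (Function.update s.1 ij.1 (s.1 ij.1 + 1),
        Function.update s.2 ij.2 (s.2 ij.2 - 1))

/-- Run the Serganova algorithm along a list of pairs. -/
def sRun (p M : ℕ) (l : List (Fin M × Fin (M + 1))) (s : SState M) : SState M :=
  l.foldl (fun s ij => sStep p M ij s) s

/-- Run the inverse algorithm along a list of pairs. -/
def tRun (p M : ℕ) (l : List (Fin M × Fin (M + 1))) (s : SState M) : SState M :=
  l.foldl (fun s ij => tStep p M ij s) s

/-- The Version 2 order on the pair set `P` (0-based):
`i` decreasing from `M-1` down to `0`, and for fixed `i`, `j` increasing from `0` to `i`.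
This is the paper's order `(M,1),(M,2),…,(M,M),(M-1,1),…,(M-1,M-1),…,(1,1)`. -/
def order2 (M : ℕ) : List (Fin M × Fin (M + 1)) :=
  (List.finRange M).reverse.flatMap fun i =>
    ((List.finRange M).filter fun j => j ≤ i).map fun j => (i, j.castSucc)

/-- The Serganova map `S₁` (Version 1 order). -/
def S1 (p M : ℕ) (s : SState M) : SState M := sRun p M (order1 M) s

/-- The Serganova map `S₂` (Version 2 order). -/
def S2 (p M : ℕ) (s : SState M) : SState M := sRun p M (order2 M) s

/-- The inverse algorithm `T₁`: inverse steps, pairs processed in reverse Version 1 order. -/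
def T1 (p M : ℕ) (s : SState M) : SState M := tRun p M (order1 M).reverse s

/-- The inverse algorithm `T₂`: inverse steps, pairs processed in reverse Version 2 order. -/
def T2 (p M : ℕ) (s : SState M) : SState M := tRun p M (order2 M).reverse s

/-- The set `A` of dominant pairs: `λ_1 ≥ … ≥ λ_M` and `θ_1 ≥ … ≥ θ_{M+1}`. -/
def domA (M : ℕ) : Set (SState M) := {s | Antitone s.1 ∧ Antitone s.2}

/-- The set `𝕄`: dominant pairs such that (in 1-based terms) for `2 ≤ i ≤ M`,
`λ_{i-1} = λ_i → p ∣ λ_i + θ_i`, and for `1 ≤ i ≤ M`, `θ_i = θ_{i+1} → p ∣ λ_i + θ_i`. -/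
def setM (p M : ℕ) : Set (SState M) :=
  {s | Antitone s.1 ∧ Antitone s.2 ∧
    (∀ (i : ℕ) (hi : i + 1 < M),
      s.1 ⟨i, by omega⟩ = s.1 ⟨i + 1, hi⟩ →
        (p : ℤ) ∣ s.1 ⟨i + 1, hi⟩ + s.2 ⟨i + 1, by omega⟩) ∧
    (∀ (i : ℕ) (hi : i < M),
      s.2 ⟨i, by omega⟩ = s.2 ⟨i + 1, by omega⟩ →
        (p : ℤ) ∣ s.1 ⟨i, hi⟩ + s.2 ⟨i, by omega⟩)}

/-- The number of steps of the Version 1 order up to and including the step processing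
the (0-based) pair `(a, a)` (the paper's pair `(i,i)` with `i = a+1`). -/
def stepIndex (M : ℕ) (a : Fin M) : ℕ := (order1 M).idxOf (a, a.castSucc) + 1

/-- The state of the Version 1 algorithm just after the step processing the
(0-based) pair `(a, a)`. -/
def midState (p M : ℕ) (a : Fin M) (s : SState M) : SState M :=
  sRun p M ((order1 M).take (stepIndex M a)) s

/-!
In the Version 1 order the pairs are sorted by increasing `j` and, for equal `j`, by
decreasing `i`; since every pair has `j ≤ i`, each pair processed after `(i, i)` has both
indices larger than `i`. A step only touches `λ` and `θ` at its own indices, so `λ_{i-1}`,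
`λ_i` and `θ_i` are untouched from then on.
-/

theorem List.Pairwise.rel_of_mem_drop_idxOf {α : Type*} [BEq α] [LawfulBEq α]
    {R : α → α → Prop} {l : List α} (hl : l.Pairwise R) {x y : α} (hx : x ∈ l)
    (hy : y ∈ l.drop (l.idxOf x + 1)) : R x y := by
  rw [← List.take_append_drop (l.idxOf x + 1) l, List.pairwise_append] at hl
  have hlt : l.idxOf x < l.length := List.idxOf_lt_length_iff.mpr hx
  have hx' := List.getElem_mem (l := l.take (l.idxOf x + 1)) (n := l.idxOf x) (by simp [hlt])
  rw [List.getElem_take, List.getElem_idxOf hlt] at hx'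
  exact hl.2.2 x hx' y hy

section Run

variable (p M : ℕ)

theorem sRun_append (l₁ l₂ : List (Fin M × Fin (M + 1))) (s : SState M) :
    sRun p M (l₁ ++ l₂) s = sRun p M l₂ (sRun p M l₁ s) :=
  List.foldl_append

theorem sRun_take_of_le (l : List (Fin M × Fin (M + 1))) (s : SState M) {k m : ℕ}
    (hkm : k ≤ m) :
    sRun p M (l.take m) s = sRun p M ((l.drop k).take (m - k)) (sRun p M (l.take k) s) := by
  rw [← sRun_append, ← List.take_add, Nat.add_sub_cancel' hkm]

theorem sRun_fst_of_forall_ne (l : List (Fin M × Fin (M + 1))) (s : SState M) (b : Fin M)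
    (h : ∀ ij ∈ l, ij.1 ≠ b) : (sRun p M l s).1 b = s.1 b := by
  induction l generalizing s with
  | nil => rfl
  | cons ij l ih =>
    rw [sRun, List.foldl_cons, ← sRun, ih _ fun x hx => h x (List.mem_cons_of_mem _ hx), sStep]
    split
    · rfl
    · exact update_of_ne (h ij List.mem_cons_self).symm _ _

theorem sRun_snd_of_forall_ne (l : List (Fin M × Fin (M + 1))) (s : SState M)
    (c : Fin (M + 1)) (h : ∀ ij ∈ l, ij.2 ≠ c) : (sRun p M l s).2 c = s.2 c := by
  induction l generalizing s with
  | nil => rfl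
  | cons ij l ih =>
    rw [sRun, List.foldl_cons, ← sRun, ih _ fun x hx => h x (List.mem_cons_of_mem _ hx), sStep]
    split
    · rfl
    · exact update_of_ne (h ij List.mem_cons_self).symm _ _

end Run

def Order1Lt {M : ℕ} (x y : Fin M × Fin (M + 1)) : Prop :=
  x.2 < y.2 ∨ (x.2 = y.2 ∧ y.1 < x.1)

theorem pairwise_order1 (M : ℕ) : (order1 M).Pairwise Order1Lt := by
  refine List.pairwise_flatMap.mpr ⟨fun j _ => ?_, ?_⟩
  · refine List.pairwise_map.mpr (List.Pairwise.filter _ ?_)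
    exact (List.pairwise_reverse.mpr (List.pairwise_lt_finRange M)).imp fun h => Or.inr ⟨rfl, h⟩
  · refine (List.pairwise_lt_finRange M).imp fun hj x hx y hy => Or.inl ?_
    simp only [List.mem_map] at hx hy
    obtain ⟨_, _, rfl⟩ := hx
    obtain ⟨_, _, rfl⟩ := hy
    exact Fin.castSucc_lt_castSucc_iff.mpr hj

theorem mem_order1_iff {M : ℕ} {ij : Fin M × Fin (M + 1)} :
    ij ∈ order1 M ↔ (ij.2 : ℕ) ≤ ij.1 := by
  obtain ⟨i, j⟩ := ij
  simp only [order1, List.mem_flatMap, List.mem_finRange, List.mem_map, List.mem_filter,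
    List.mem_reverse, true_and, decide_eq_true_eq, Prod.mk.injEq]
  constructor
  · rintro ⟨j, i, hji, rfl, rfl⟩
    exact hji
  · intro hji
    exact ⟨⟨j, by omega⟩, i, Fin.le_def.mpr hji, rfl, Fin.ext rfl⟩

theorem lt_of_mem_drop_stepIndex {M : ℕ} (a : Fin M) {ij : Fin M × Fin (M + 1)}
    (h : ij ∈ (order1 M).drop (stepIndex M a)) : (a : ℕ) < ij.2 ∧ (a : ℕ) < ij.1 := by
  have hij : (ij.2 : ℕ) ≤ ij.1 := mem_order1_iff.mp (List.mem_of_mem_drop h)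
  have haa : (a, a.castSucc) ∈ order1 M := mem_order1_iff.mpr le_rfl
  rcases (pairwise_order1 M).rel_of_mem_drop_idxOf haa h with hlt | ⟨heq, hlt⟩
  · have : (a : ℕ) < ij.2 := hlt
    omega
  · have : (a : ℕ) = ij.2 := congrArg Fin.val heq
    have : (ij.1 : ℕ) < a := hlt
    omega

theorem sRun_frozen_entries (p M : ℕ) (a : Fin M) (l : List (Fin M × Fin (M + 1)))
    (hl : ∀ ij ∈ l, (a : ℕ) < ij.2 ∧ (a : ℕ) < ij.1) (t : SState M) :
    (sRun p M l t).1 a = t.1 a ∧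
      (sRun p M l t).1 ⟨(a : ℕ) - 1, Nat.lt_of_le_of_lt (Nat.sub_le _ _) a.isLt⟩ =
        t.1 ⟨(a : ℕ) - 1, Nat.lt_of_le_of_lt (Nat.sub_le _ _) a.isLt⟩ ∧
      (sRun p M l t).2 a.castSucc = t.2 a.castSucc := by
  refine ⟨sRun_fst_of_forall_ne p M l t _ ?_, sRun_fst_of_forall_ne p M l t _ ?_,
    sRun_snd_of_forall_ne p M l t _ ?_⟩ <;> intro ij hij <;> have := hl ij hij
  · exact Fin.ne_of_val_ne (by omega)
  · exact Fin.ne_of_val_ne (by simp only; omega)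
  · exact Fin.ne_of_val_ne (by rw [Fin.val_castSucc]; omega)

theorem serganova_v1_frozen_entries_general (p M : ℕ)
    (s : SState M) (a : Fin M) :
    (∀ m : ℕ, stepIndex M a ≤ m →
      (sRun p M ((order1 M).take m) s).1 a = (midState p M a s).1 a ∧
      (0 < (a : ℕ) →
        (sRun p M ((order1 M).take m) s).1
            ⟨(a : ℕ) - 1, Nat.lt_of_le_of_lt (Nat.sub_le _ _) a.isLt⟩ =
          (midState p M a s).1 ⟨(a : ℕ) - 1, Nat.lt_of_le_of_lt (Nat.sub_le _ _) a.isLt⟩) ∧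
      (sRun p M ((order1 M).take m) s).2 a.castSucc = (midState p M a s).2 a.castSucc) ∧
    (S1 p M s).1 a = (midState p M a s).1 a ∧
    (0 < (a : ℕ) →
      (S1 p M s).1 ⟨(a : ℕ) - 1, Nat.lt_of_le_of_lt (Nat.sub_le _ _) a.isLt⟩ =
        (midState p M a s).1 ⟨(a : ℕ) - 1, Nat.lt_of_le_of_lt (Nat.sub_le _ _) a.isLt⟩) ∧
    (S1 p M s).2 a.castSucc = (midState p M a s).2 a.castSucc := by
  have hS1 : S1 p M s = sRun p M ((order1 M).drop (stepIndex M a)) (midState p M a s) := by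
    rw [S1, midState, ← sRun_append, List.take_append_drop]
  refine ⟨fun m hm => ?_, ?_⟩
  · obtain ⟨h₁, h₀, h₂⟩ := sRun_frozen_entries p M a _
      (fun ij hij => lt_of_mem_drop_stepIndex a (List.mem_of_mem_take hij)) (midState p M a s)
    rw [sRun_take_of_le p M _ s hm]
    exact ⟨h₁, fun _ => h₀, h₂⟩
  · obtain ⟨h₁, h₀, h₂⟩ := sRun_frozen_entries p M a _
      (fun ij hij => lt_of_mem_drop_stepIndex a hij) (midState p M a s)
    rw [hS1]
    exact ⟨h₁, fun _ => h₀, h₂⟩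

/-- Fix `i` with `1 ≤ i ≤ M` (0-based: `a = i - 1`). After the step of
Version 1 processing the pair `(i,i)`, the entries `λ_{i-1}` (if `i ≥ 2`), `λ_i` and `θ_i`
are never modified by any later step; consequently their values after that step equal the
corresponding entries of `S₁(λ,θ)`. -/
theorem serganova_v1_frozen_entries (p M : ℕ) (hp : p.Prime) (hM : 1 ≤ M)
    (s : SState M) (hs : s ∈ domA M) (a : Fin M) :
    (∀ m : ℕ, stepIndex M a ≤ m →
      (sRun p M ((order1 M).take m) s).1 a = (midState p M a s).1 a ∧
      (0 < (a : ℕ) →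
        (sRun p M ((order1 M).take m) s).1
            ⟨(a : ℕ) - 1, Nat.lt_of_le_of_lt (Nat.sub_le _ _) a.isLt⟩ =
          (midState p M a s).1 ⟨(a : ℕ) - 1, Nat.lt_of_le_of_lt (Nat.sub_le _ _) a.isLt⟩) ∧
      (sRun p M ((order1 M).take m) s).2 a.castSucc = (midState p M a s).2 a.castSucc) ∧
    (S1 p M s).1 a = (midState p M a s).1 a ∧
    (0 < (a : ℕ) →
      (S1 p M s).1 ⟨(a : ℕ) - 1, Nat.lt_of_le_of_lt (Nat.sub_le _ _) a.isLt⟩ =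
        (midState p M a s).1 ⟨(a : ℕ) - 1, Nat.lt_of_le_of_lt (Nat.sub_le _ _) a.isLt⟩) ∧
    (S1 p M s).2 a.castSucc = (midState p M a s).2 a.castSucc :=
  serganova_v1_frozen_entries_general p M s a
end
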